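/- Let f : ℝ → X be a bounded non-increasing function into a Banach lattice X such that the closure of the range of f is compact. Then the set of points at which f is discontinuous is at most countable. -/

import Mathlib

/-!
Relative compactness of the range stands in for order completeness: a cluster point `l` of `f`
along `𝓝[<] x` is a lower bound of `f` there, and solidity of the norm turns `l ≤ f u ≤ f s`
into `‖f u - l‖ ≤ ‖f s - l‖`, so `f` has one-sided limits everywhere. By monotonicity, `f` is
discontinuous only where its two one-sided limits differ, and the points where they differ
by at least `ε` form a discrete, hence countable, subset of `ℝ`.
-/

open Filter Topology Set

section

variable {ι X : Type*} [NormedAddCommGroup X] [Lattice X] [HasSolidNorm X] [IsOrderedAddMonoid X]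

theorem norm_sub_le_norm_sub_of_le_of_le {a b c : X} (hab : a ≤ b) (hbc : b ≤ c) :
    ‖b - a‖ ≤ ‖c - a‖ :=
  norm_le_norm_of_abs_le_abs <| by
    rwa [abs_of_nonneg (sub_nonneg.2 hab), abs_of_nonneg (sub_nonneg.2 (hab.trans hbc)),
      sub_le_sub_iff_right]

theorem tendsto_of_mapClusterPt_of_eventually_le {F : Filter ι} {g : ι → X} {a : X}
    (ha : MapClusterPt a F g) (hg : ∀ᶠ s in F, ∀ᶠ u in F, g u ≤ g s) :
    Tendsto g F (𝓝 a) := by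
  have ha_le : ∀ᶠ u in F, a ≤ g u :=
    hg.mono fun u hu => isClosed_Iic.mem_of_mapClusterPt ha hu
  refine Metric.tendsto_nhds.2 fun ε hε => ?_
  obtain ⟨s, hs, hgs⟩ := ((ha.frequently (Metric.ball_mem_nhds a hε)).and_eventually hg).exists
  filter_upwards [hgs, ha_le] with u hus hau
  rw [dist_eq_norm] at hs ⊢
  exact (norm_sub_le_norm_sub_of_le_of_le hau hus).trans_lt hs

theorem IsCompact.exists_tendsto_of_eventually_le {F : Filter ι} [F.NeBot] {g : ι → X}
    (hc : IsCompact (closure (range g))) (hg : ∀ᶠ s in F, ∀ᶠ u in F, g u ≤ g s) :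
    ∃ a, Tendsto g F (𝓝 a) := by
  obtain ⟨a, -, ha⟩ := hc.exists_mapClusterPt (f := F) (u := g) <| tendsto_principal.2 <|
    Eventually.of_forall fun s => subset_closure (mem_range_self s)
  exact ⟨a, tendsto_of_mapClusterPt_of_eventually_le ha hg⟩

theorem IsCompact.exists_tendsto_of_eventually_ge {F : Filter ι} [F.NeBot] {g : ι → X}
    (hc : IsCompact (closure (range g))) (hg : ∀ᶠ s in F, ∀ᶠ u in F, g s ≤ g u) :
    ∃ a, Tendsto g F (𝓝 a) :=
  IsCompact.exists_tendsto_of_eventually_le (X := Xᵒᵈ) hc hg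

end

section

variable {α X : Type*} [LinearOrder α] [TopologicalSpace α]

theorem Antitone.continuousAt_of_tendsto_nhdsLT_nhdsGT [PartialOrder X] [TopologicalSpace X]
    [OrderClosedTopology X] {f : α → X} (hf : Antitone f) {x : α} [(𝓝[<] x).NeBot]
    [(𝓝[>] x).NeBot] {l : X} (hl : Tendsto f (𝓝[<] x) (𝓝 l)) (hr : Tendsto f (𝓝[>] x) (𝓝 l)) :
    ContinuousAt f x := by
  have hfx : f x = l := le_antisymm
    (_root_.ge_of_tendsto hl <| eventually_nhdsWithin_of_forall fun _ hu => hf (le_of_lt hu))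
    (_root_.le_of_tendsto hr <| eventually_nhdsWithin_of_forall fun _ hu => hf (le_of_lt hu))
  rw [continuousAt_iff_continuous_left'_right', ContinuousWithinAt, ContinuousWithinAt, hfx]
  exact ⟨hl, hr⟩

variable [OrderTopology α]

theorem Antitone.exists_tendsto_nhdsLT [NormedAddCommGroup X] [Lattice X] [HasSolidNorm X]
    [IsOrderedAddMonoid X] {f : α → X} (hf : Antitone f) (hc : IsCompact (closure (range f)))
    (x : α) [(𝓝[<] x).NeBot] : ∃ l, Tendsto f (𝓝[<] x) (𝓝 l) :=
  hc.exists_tendsto_of_eventually_le <| by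
    filter_upwards [self_mem_nhdsWithin] with s (hs : s < x)
    filter_upwards [Ioo_mem_nhdsLT hs] with u hu
    exact hf hu.1.le

theorem Antitone.exists_tendsto_nhdsGT [NormedAddCommGroup X] [Lattice X] [HasSolidNorm X]
    [IsOrderedAddMonoid X] {f : α → X} (hf : Antitone f) (hc : IsCompact (closure (range f)))
    (x : α) [(𝓝[>] x).NeBot] : ∃ l, Tendsto f (𝓝[>] x) (𝓝 l) :=
  hc.exists_tendsto_of_eventually_ge <| by
    filter_upwards [self_mem_nhdsWithin] with s (hs : x < s)
    filter_upwards [Ioo_mem_nhdsGT hs] with u hu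
    exact hf hu.2.le

variable [DenselyOrdered α] [NoMinOrder α] [NoMaxOrder α]

theorem eventually_dist_lt_of_tendsto_nhdsWithin [PseudoMetricSpace X] {f L R : α → X}
    (hL : ∀ y, Tendsto f (𝓝[<] y) (𝓝 (L y))) (hR : ∀ y, Tendsto f (𝓝[>] y) (𝓝 (R y)))
    {s : Set α} (hs : IsOpen s) {x : α} {r : X} (hr : Tendsto f (𝓝[s] x) (𝓝 r))
    {ε : ℝ} (hε : 0 < ε) : ∀ᶠ y in 𝓝[s] x, dist (L y) (R y) < ε := by
  have hnear : ∀ᶠ y in 𝓝[s] x, ∀ᶠ z in 𝓝 y, f z ∈ Metric.closedBall r (ε / 3) := by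
    filter_upwards [eventually_eventually_nhdsWithin.2
      (hr (Metric.closedBall_mem_nhds r (ε := ε / 3) (by positivity))), self_mem_nhdsWithin]
      with y hy hys
    rwa [hs.nhdsWithin_eq hys] at hy
  filter_upwards [hnear] with y hy
  have hLy := Metric.isClosed_closedBall.mem_of_tendsto (hL y) (hy.filter_mono nhdsWithin_le_nhds)
  have hRy := Metric.isClosed_closedBall.mem_of_tendsto (hR y) (hy.filter_mono nhdsWithin_le_nhds)
  calc dist (L y) (R y) ≤ dist (L y) r + dist (R y) r := dist_triangle_right _ _ _
    _ ≤ ε / 3 + ε / 3 := add_le_add hLy hRy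
    _ < ε := by linarith

theorem countable_setOf_le_dist_of_tendsto_nhdsLT_nhdsGT [SecondCountableTopology α]
    [PseudoMetricSpace X] {f L R : α → X} (hL : ∀ x, Tendsto f (𝓝[<] x) (𝓝 (L x)))
    (hR : ∀ x, Tendsto f (𝓝[>] x) (𝓝 (R x))) {ε : ℝ} (hε : 0 < ε) :
    {x | ε ≤ dist (L x) (R x)}.Countable := by
  refine (HereditarilyLindelofSpace.isLindelof _).countable_of_isDiscrete <|
    isDiscrete_iff_nhdsNE.2 fun x _ => ?_
  rw [inf_principal_eq_bot, ← nhdsLT_sup_nhdsGT, mem_sup]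
  exact ⟨(eventually_dist_lt_of_tendsto_nhdsWithin hL hR isOpen_Iio (hL x) hε).mono
      fun _ => not_le.2,
    (eventually_dist_lt_of_tendsto_nhdsWithin hL hR isOpen_Ioi (hR x) hε).mono fun _ => not_le.2⟩

theorem countable_setOf_ne_of_tendsto_nhdsLT_nhdsGT [SecondCountableTopology α]
    [MetricSpace X] {f L R : α → X} (hL : ∀ x, Tendsto f (𝓝[<] x) (𝓝 (L x)))
    (hR : ∀ x, Tendsto f (𝓝[>] x) (𝓝 (R x))) : {x | L x ≠ R x}.Countable := by
  refine (countable_iUnion fun n : ℕ =>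
    countable_setOf_le_dist_of_tendsto_nhdsLT_nhdsGT hL hR (Nat.one_div_pos_of_nat (n := n))).mono
    fun x hx => mem_iUnion.2 ?_
  obtain ⟨n, hn⟩ := exists_nat_one_div_lt (dist_pos.2 hx)
  exact ⟨n, hn.le⟩

end

theorem countable_discontinuities_of_antitone_general
    {X : Type*} [NormedAddCommGroup X] [Lattice X] [HasSolidNorm X] [IsOrderedAddMonoid X]
    (f : ℝ → X)
    (hf_anti : Antitone f)
    (hf_cpt : IsCompact (closure (Set.range f))) :
    {x : ℝ | ¬ ContinuousAt f x}.Countable := by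
  choose L hL using fun x => hf_anti.exists_tendsto_nhdsLT hf_cpt x
  choose R hR using fun x => hf_anti.exists_tendsto_nhdsGT hf_cpt x
  exact (countable_setOf_ne_of_tendsto_nhdsLT_nhdsGT hL hR).mono fun x =>
    mt fun (hLR : L x = R x) => hf_anti.continuousAt_of_tendsto_nhdsLT_nhdsGT (hL x) (hLR ▸ hR x)

/-- A bounded non-increasing function into a Banach lattice with relatively compact
range has at most countably many points of discontinuity. -/
theorem countable_discontinuities_of_antitone
    {X : Type*} [NormedAddCommGroup X] [Lattice X] [HasSolidNorm X] [IsOrderedAddMonoid X]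
    [CompleteSpace X]
    (f : ℝ → X)
    (hf_anti : Antitone f)
    (hf_bdd : ∃ C : ℝ, ∀ x : ℝ, ‖f x‖ ≤ C)
    (hf_cpt : IsCompact (closure (Set.range f))) :
    {x : ℝ | ¬ ContinuousAt f x}.Countable :=
  countable_discontinuities_of_antitone_general f hf_anti hf_cpt
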